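/- Consider the sticky hard sphere potential in dimension 1: V(x) = +∞ if |x| < 1, V(x) = -1 if |x| = 1, V(x) = 0 if |x| > 1. For every N ≥ 2, the configuration x_i = i (equally spaced points at distance 1) attains the minimum energy E_N = -2(N-1), and every configuration has E_N ≥ -2(N-1). -/

import Mathlib

/-!
A configuration with two points closer than 1 has energy `⊤`. Otherwise the energy is minus the
number of ordered pairs `(i, j)` with `|x_i - x_j| = 1`, which is twice the number of pairs with
`x_j = x_i + 1`. Such a pair is determined by `j`, and `j` is never the leftmost point, so there
are at most `N - 1` of them; the equally spaced configuration has exactly `N - 1`.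
-/

/-- The 1D sticky hard sphere potential. -/
noncomputable def stickyV (x : ℝ) : EReal :=
  if |x| < 1 then ⊤ else if |x| = 1 then -1 else 0

open Finset

namespace EReal

theorem coe_finset_sum {α : Type*} (s : Finset α) (f : α → ℝ) :
    ((∑ a ∈ s, f a : ℝ) : EReal) = ∑ a ∈ s, (f a : EReal) :=
  map_sum (⟨⟨Real.toEReal, coe_zero⟩, coe_add⟩ : ℝ →+ EReal) f s

theorem sum_ne_bot {α : Type*} {s : Finset α} {f : α → EReal} (h : ∀ a ∈ s, f a ≠ ⊥) :
    ∑ a ∈ s, f a ≠ ⊥ := by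
  induction s using Finset.cons_induction with
  | empty => simp
  | cons a s ha ih =>
    rw [sum_cons]
    exact add_ne_bot_iff.2 ⟨h a (mem_cons_self a s), ih fun b hb => h b (mem_cons_of_mem hb)⟩

theorem sum_eq_top_of_mem {α : Type*} [DecidableEq α] {s : Finset α} {f : α → EReal}
    (h : ∀ a ∈ s, f a ≠ ⊥) {a : α} (ha : a ∈ s) (hfa : f a = ⊤) :
    ∑ a ∈ s, f a = ⊤ := by
  rw [← add_sum_erase s f ha, hfa,
    top_add_of_ne_bot (sum_ne_bot fun b hb => h b (mem_of_mem_erase hb))]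

end EReal

theorem stickyV_ne_bot (x : ℝ) : stickyV x ≠ ⊥ := by
  unfold stickyV
  split_ifs <;> simp [← EReal.coe_one, ← EReal.coe_neg]

theorem stickyV_of_abs_lt {x : ℝ} (h : |x| < 1) : stickyV x = ⊤ := if_pos h

theorem stickyV_of_one_le_abs {x : ℝ} (h : 1 ≤ |x|) :
    stickyV x = ((-(if |x| = 1 then 1 else 0) : ℝ) : EReal) := by
  rw [stickyV, if_neg h.not_gt]
  split_ifs <;> simp

section Energy

variable {ι : Type*} [Fintype ι] [DecidableEq ι] (X : ι → ℝ)

noncomputable def stickyEnergy : EReal := ∑ i, ∑ j ∈ univ.erase i, stickyV (X i - X j)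

noncomputable def contacts : Finset (ι × ι) := {p : ι × ι | |X p.1 - X p.2| = 1}

noncomputable def rightContacts : Finset (ι × ι) := {p : ι × ι | X p.2 = X p.1 + 1}

theorem card_contacts : #(contacts X) = 2 * #(rightContacts X) := by
  have hsplit : contacts X = rightContacts X ∪ ({p | X p.1 = X p.2 + 1} : Finset (ι × ι)) := by
    ext p
    simp only [contacts, rightContacts, mem_filter, mem_union, mem_univ, true_and,
      abs_eq zero_le_one]
    constructor <;> rintro (h | h) <;> [right; left; right; left] <;> linarith
  have hdisj : Disjoint (rightContacts X) ({p | X p.1 = X p.2 + 1} : Finset (ι × ι)) := by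
    rw [rightContacts, disjoint_filter]
    intro p _ h h'
    linarith
  have hswap : #(({p | X p.1 = X p.2 + 1} : Finset (ι × ι))) = #(rightContacts X) :=
    card_equiv (Equiv.prodComm ι ι) fun p => by simp [rightContacts]
  rw [hsplit, card_union_of_disjoint hdisj, hswap, two_mul]

variable {X}

theorem stickyEnergy_eq_top (hX : ¬ Pairwise fun i j => 1 ≤ |X i - X j|) :
    stickyEnergy X = ⊤ := by
  simp only [Pairwise, not_forall, not_le] at hX
  obtain ⟨i, j, hij, hlt⟩ := hX
  refine EReal.sum_eq_top_of_mem (fun _ _ => EReal.sum_ne_bot fun _ _ => stickyV_ne_bot _)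
    (mem_univ i)
    (EReal.sum_eq_top_of_mem (fun _ _ => stickyV_ne_bot _) ?_ (stickyV_of_abs_lt hlt))
  exact mem_erase.2 ⟨Ne.symm hij, mem_univ j⟩

theorem stickyEnergy_eq_neg_card_contacts (hX : Pairwise fun i j => 1 ≤ |X i - X j|) :
    stickyEnergy X = ((-(#(contacts X) : ℝ)) : EReal) := by
  have hterm : ∀ i, ∀ j ∈ univ.erase i,
      stickyV (X i - X j) = ((-(if |X i - X j| = 1 then 1 else 0) : ℝ) : EReal) :=
    fun i j hj => stickyV_of_one_le_abs (hX (ne_of_mem_erase hj).symm)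
  simp_rw [stickyEnergy, sum_congr rfl fun i _ => sum_congr rfl (hterm i), ← EReal.coe_finset_sum]
  congr 1
  -- the diagonal terms of the real sum vanish, since `|0| ≠ 1`
  rw [← sum_congr rfl fun i _ => (sum_erase univ (a := i) (by simp)).symm, ← sum_product',
    univ_product_univ, sum_neg_distrib, sum_boole]
  rfl

theorem card_rightContacts_lt [Nonempty ι] (hX : Function.Injective X) :
    #(rightContacts X) < Fintype.card ι := by
  obtain ⟨i₀, hi₀⟩ := Finite.exists_min X
  have hmaps :
      Set.MapsTo Prod.snd (rightContacts X : Set (ι × ι)) (univ.erase i₀ : Set ι) := by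
    intro p hp
    simp only [rightContacts, mem_coe, mem_filter, mem_univ, true_and] at hp
    refine mem_erase.2 ⟨fun h => ?_, mem_univ _⟩
    linarith [hi₀ p.1, congrArg X h]
  have hinj : Set.InjOn Prod.snd (rightContacts X : Set (ι × ι)) := by
    intro p hp q hq h
    simp only [rightContacts, mem_coe, mem_filter, mem_univ, true_and] at hp hq
    exact Prod.ext (hX (by linarith [congrArg X h])) h
  exact (card_le_card_of_injOn _ hmaps hinj).trans_lt (card_erase_lt_of_mem (mem_univ _))

theorem le_stickyEnergy [Nonempty ι] (X : ι → ℝ) :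
    ((-(2 * ((Fintype.card ι : ℝ) - 1)) : ℝ) : EReal) ≤ stickyEnergy X := by
  by_cases hX : Pairwise fun i j => 1 ≤ |X i - X j|
  · have hinj : Function.Injective X := fun i j h => by
      by_contra hij
      exact absurd (hX hij) (by simp [h])
    have hlt : (#(rightContacts X) : ℝ) + 1 ≤ Fintype.card ι := by
      exact_mod_cast card_rightContacts_lt hinj
    rw [stickyEnergy_eq_neg_card_contacts hX, card_contacts]
    exact EReal.coe_le_coe_iff.2 (by push_cast; linarith)
  · rw [stickyEnergy_eq_top hX]
    exact le_top

end Energy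

theorem card_rightContacts_natCast (n : ℕ) :
    #(rightContacts fun i : Fin (n + 1) => (i : ℝ)) = n := by
  set X : Fin (n + 1) → ℝ := fun i => i
  have hupper : #(rightContacts X) < n + 1 := by
    simpa using card_rightContacts_lt (X := X) fun i j h => Fin.ext (Nat.cast_injective h)
  let step : Fin n → Fin (n + 1) × Fin (n + 1) := fun i => (i.castSucc, i.succ)
  have hmaps : Set.MapsTo step (univ : Finset (Fin n)) (rightContacts X : Set _) := by
    intro i _
    simp [step, X, rightContacts]
  have hinj : Set.InjOn step (univ : Finset (Fin n)) :=
    fun i _ j _ h => Fin.castSucc_injective n (congrArg Prod.fst h)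
  have hlower : n ≤ #(rightContacts X) := by
    simpa using card_le_card_of_injOn step hmaps hinj
  omega

theorem stickyEnergy_natCast (n : ℕ) :
    stickyEnergy (fun i : Fin (n + 1) => (i : ℝ)) = ((-(2 * n : ℝ)) : EReal) := by
  have hX : Pairwise fun i j : Fin (n + 1) => 1 ≤ |(i : ℝ) - (j : ℝ)| := by
    intro i j hij
    have : ((i : ℕ) : ℤ) ≠ (j : ℕ) := by simpa [Fin.val_inj] using hij
    exact_mod_cast Int.one_le_abs (sub_ne_zero.2 this)
  rw [stickyEnergy_eq_neg_card_contacts hX, card_contacts, card_rightContacts_natCast,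
    Nat.cast_mul, Nat.cast_ofNat]

/-- In 1D, equally spaced points at distance 1 minimize the sticky hard
sphere energy, with minimal energy `-2(N-1)`. -/
theorem sticky_1d_minimizer (N : ℕ) (hN : 2 ≤ N) :
    (∑ i : Fin N, ∑ j ∈ Finset.univ.erase i, stickyV ((i : ℝ) - (j : ℝ)))
      = ((-(2 * ((N : ℝ) - 1)) : ℝ) : EReal) ∧
    ∀ X : Fin N → ℝ,
      ((-(2 * ((N : ℝ) - 1)) : ℝ) : EReal) ≤
        ∑ i : Fin N, ∑ j ∈ Finset.univ.erase i, stickyV (X i - X j) := by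
  obtain ⟨n, rfl⟩ : ∃ n, N = n + 1 := ⟨N - 1, by omega⟩
  refine ⟨?_, fun X => ?_⟩
  · simpa [stickyEnergy] using stickyEnergy_natCast n
  · simpa [stickyEnergy] using le_stickyEnergy X
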